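/- Let 𝕋 = ℝ/ℤ, let C₃ ≠ 0 and C₅ be real numbers, let a₁, a₂, a₃, a₄ ∈ ℝ, and let U : 𝕋 → ℝ be smooth. Define G₂(U) := (C₅/C₃) ( a₁ U_{2x} + a₂ (U² − ⟨U²⟩) + a₃ ( U_x (U − ⟨U⟩)_{−x} + ⟨U²⟩ − ⟨U⟩² ) + a₄ ⟨U⟩ (U − ⟨U⟩) ) and F₃(U) := C₃ (U_{3x} + 6 U U_x). Then the Lie bracket satisfies [G₂, F₃](U) = C₅ { (12a₁ − 6a₂ − 3a₃) U_x U_{2x} − 3a₃ U U_{3x} − (6a₂ + 3a₃) U² U_x + (6a₃ − 6a₄) ⟨U⟩ U U_x + 3a₃ ⟨U⟩ U_{3x} + (6a₂ − 9a₃) ⟨U²⟩ U_x + (6a₃ + 6a₄) ⟨U⟩² U_x }. -/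

import Mathlib

/-- The average `⟨F⟩ = ∫_𝕋 F(x) dx` of a (1-periodic) function on the circle. -/
noncomputable def avg (F : ℝ → ℝ) : ℝ := ∫ x in (0:ℝ)..1, F x

/-- The zero-average primitive `F_{−x}` of a zero-average function `F` on the circle. -/
noncomputable def prim (F : ℝ → ℝ) : ℝ → ℝ := fun x =>
  (∫ t in (0:ℝ)..x, F t) - ∫ s in (0:ℝ)..1, ∫ t in (0:ℝ)..s, F t

/-- The first normal form generator
`G₂(U) = (C₅/C₃)(a₁U_{2x} + a₂(U² − ⟨U²⟩)
  + a₃(U_x(U − ⟨U⟩)_{−x} + ⟨U²⟩ − ⟨U⟩²) + a₄⟨U⟩(U − ⟨U⟩))`. -/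
noncomputable def G2op (C₃ C₅ a₁ a₂ a₃ a₄ : ℝ) (F : ℝ → ℝ) : ℝ → ℝ := fun x =>
  (C₅ / C₃) * (a₁ * iteratedDeriv 2 F x
    + a₂ * (F x ^ 2 - avg (fun y => F y ^ 2))
    + a₃ * (deriv F x * prim (fun y => F y - avg F) x
        + avg (fun y => F y ^ 2) - (avg F) ^ 2)
    + a₄ * avg F * (F x - avg F))

/-- The KdV map `F₃(U) = C₃(U_{3x} + 6 U U_x)`. -/
noncomputable def F3op (C₃ : ℝ) (F : ℝ → ℝ) : ℝ → ℝ := fun x =>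
  C₃ * (iteratedDeriv 3 F x + 6 * F x * deriv F x)

private lemma HDcongr {f : ℝ → ℝ} {a b x : ℝ} (h : HasDerivAt f a x) (hab : a = b) :
    HasDerivAt f b x := hab ▸ h

private lemma iteratedDeriv_two (f : ℝ → ℝ) : iteratedDeriv 2 f = deriv (deriv f) := by
  rw [show (2:ℕ) = 1 + 1 from rfl, iteratedDeriv_succ, iteratedDeriv_one]

private lemma iteratedDeriv_three (f : ℝ → ℝ) : iteratedDeriv 3 f = deriv (deriv (deriv f)) := by
  rw [show (3:ℕ) = 2 + 1 from rfl, iteratedDeriv_succ, iteratedDeriv_two]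

private lemma periodic_deriv {f : ℝ → ℝ} (hf : Function.Periodic f 1) :
    Function.Periodic (deriv f) 1 := by
  intro x
  have h : deriv (fun y => f (y + 1)) x = deriv f (x + 1) := deriv_comp_add_const f 1 x
  rw [← h]
  congr 1
  funext y
  exact hf y

private lemma avg_of_hasDerivAt {H h : ℝ → ℝ} (hd : ∀ y, HasDerivAt H (h y) y)
    (hc : Continuous h) (hp : Function.Periodic H 1) : avg h = 0 := by
  unfold avg
  rw [intervalIntegral.integral_eq_sub_of_hasDerivAt (fun y _ => hd y) (hc.intervalIntegrable 0 1)]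
  have h1 : H 1 = H 0 := by simpa using hp 0
  rw [h1, sub_self]

private lemma prim_hasDerivAt {F : ℝ → ℝ} (hF : Continuous F) (x : ℝ) :
    HasDerivAt (prim F) (F x) x := by
  unfold prim
  exact ((hF.integral_hasStrictDerivAt 0 x).hasDerivAt).sub_const _

private lemma prim_eq_of_hasDerivAt {H h : ℝ → ℝ} (hd : ∀ y, HasDerivAt H (h y) y)
    (hc : Continuous h) (x : ℝ) : prim h x = H x - avg H := by
  have hHc : Continuous H :=
    continuous_iff_continuousAt.mpr fun y => (hd y).differentiableAt.continuousAt
  have key : ∀ s : ℝ, (∫ t in (0:ℝ)..s, h t) = H s - H 0 := fun s =>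
    intervalIntegral.integral_eq_sub_of_hasDerivAt (fun y _ => hd y) (hc.intervalIntegrable 0 s)
  unfold prim avg
  rw [key x, intervalIntegral.integral_congr (fun s _ => key s),
    intervalIntegral.integral_sub (hHc.intervalIntegrable 0 1) intervalIntegrable_const,
    intervalIntegral.integral_const]
  simp

private lemma avg_const_mul (c : ℝ) (f : ℝ → ℝ) : avg (fun y => c * f y) = c * avg f := by
  unfold avg
  exact intervalIntegral.integral_const_mul c f

private lemma avg_add_mul {f g : ℝ → ℝ} (hf : Continuous f) (hg : Continuous g) (c : ℝ) :
    avg (fun y => f y + c * g y) = avg f + c * avg g := by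
  unfold avg
  dsimp only
  have h2 : IntervalIntegrable (fun y => c * g y) MeasureTheory.volume 0 1 :=
    (continuous_const.mul hg).intervalIntegrable 0 1
  rw [intervalIntegral.integral_add (hf.intervalIntegrable 0 1)
      h2, intervalIntegral.integral_const_mul]

private lemma prim_add_mul {f g : ℝ → ℝ} (hf : Continuous f) (hg : Continuous g) (c x : ℝ) :
    prim (fun y => f y + c * g y) x = prim f x + c * prim g x := by
  unfold prim
  have key : ∀ s : ℝ, (∫ t in (0:ℝ)..s, (f t + c * g t)) =
      (∫ t in (0:ℝ)..s, f t) + c * ∫ t in (0:ℝ)..s, g t := fun s => by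
    have h2 : IntervalIntegrable (fun y => c * g y) MeasureTheory.volume 0 s :=
      (continuous_const.mul hg).intervalIntegrable 0 s
    rw [intervalIntegral.integral_add (hf.intervalIntegrable 0 s)
      h2, intervalIntegral.integral_const_mul]
  have hfc : Continuous fun s => ∫ t in (0:ℝ)..s, f t :=
    continuous_iff_continuousAt.mpr fun s =>
      ((hf.integral_hasStrictDerivAt 0 s).hasDerivAt.differentiableAt).continuousAt
  have hgc : Continuous fun s => ∫ t in (0:ℝ)..s, g t :=
    continuous_iff_continuousAt.mpr fun s =>
      ((hg.integral_hasStrictDerivAt 0 s).hasDerivAt.differentiableAt).continuousAt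
  have h2 : IntervalIntegrable (fun s => c * ∫ t in (0:ℝ)..s, g t) MeasureTheory.volume 0 1 :=
    (continuous_const.mul hgc).intervalIntegrable 0 1
  rw [key x, intervalIntegral.integral_congr (fun s _ => key s),
    intervalIntegral.integral_add (hfc.intervalIntegrable 0 1)
      h2, intervalIntegral.integral_const_mul]
  ring

/-- The Lie bracket `[G₂, F₃](U)` equals
`C₅{(12a₁ − 6a₂ − 3a₃)U_xU_{2x} − 3a₃UU_{3x} − (6a₂ + 3a₃)U²U_x
  + (6a₃ − 6a₄)⟨U⟩UU_x + 3a₃⟨U⟩U_{3x} + (6a₂ − 9a₃)⟨U²⟩U_x + (6a₃ + 6a₄)⟨U⟩²U_x}`. -/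
theorem stmt_10 (C₃ C₅ : ℝ) (hC₃ : C₃ ≠ 0) (a₁ a₂ a₃ a₄ : ℝ)
    (U : ℝ → ℝ) (hU : ContDiff ℝ (⊤ : ℕ∞) U) (hper : Function.Periodic U 1) :
    ∀ x : ℝ,
      HasDerivAt (fun ε : ℝ =>
          G2op C₃ C₅ a₁ a₂ a₃ a₄ (fun y => U y + ε * F3op C₃ U y) x
            - F3op C₃ (fun y => U y + ε * G2op C₃ C₅ a₁ a₂ a₃ a₄ U y) x)
        (C₅ * ((12 * a₁ - 6 * a₂ - 3 * a₃) * deriv U x * iteratedDeriv 2 U x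
          - 3 * a₃ * U x * iteratedDeriv 3 U x
          - (6 * a₂ + 3 * a₃) * U x ^ 2 * deriv U x
          + (6 * a₃ - 6 * a₄) * avg U * U x * deriv U x
          + 3 * a₃ * avg U * iteratedDeriv 3 U x
          + (6 * a₂ - 9 * a₃) * avg (fun y => U y ^ 2) * deriv U x
          + (6 * a₃ + 6 * a₄) * (avg U) ^ 2 * deriv U x)) 0 := by
  intro x
  have hdiffn : ∀ n : ℕ, Differentiable ℝ (iteratedDeriv n U) := fun n =>
    hU.differentiable_iteratedDeriv n (by exact_mod_cast ENat.coe_lt_top n)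
  have D : ∀ (n : ℕ) (y : ℝ), HasDerivAt (iteratedDeriv n U) (iteratedDeriv (n+1) U y) y := by
    intro n y
    rw [iteratedDeriv_succ]
    exact ((hdiffn n) y).hasDerivAt
  have D0 : ∀ y : ℝ, HasDerivAt U (deriv U y) y := fun y => (hU.differentiable (by simp) y).hasDerivAt
  have D1 : ∀ y : ℝ, HasDerivAt (deriv U) (iteratedDeriv 2 U y) y := by
    intro y
    have := D 1 y
    rwa [iteratedDeriv_one] at this
  have D2 : ∀ y : ℝ, HasDerivAt (iteratedDeriv 2 U) (iteratedDeriv 3 U y) y := fun y => D 2 y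
  have D3 : ∀ y : ℝ, HasDerivAt (iteratedDeriv 3 U) (iteratedDeriv 4 U y) y := fun y => D 3 y
  have D4 : ∀ y : ℝ, HasDerivAt (iteratedDeriv 4 U) (iteratedDeriv 5 U y) y := fun y => D 4 y
  have hC0 : Continuous U := hU.continuous
  have hC1 : Continuous (deriv U) := by
    rw [← iteratedDeriv_one]
    exact (hdiffn 1).continuous
  have hC2 : Continuous (iteratedDeriv 2 U) := (hdiffn 2).continuous
  have hC3 : Continuous (iteratedDeriv 3 U) := (hdiffn 3).continuous
  have hCW : Continuous (fun y => C₃ * (iteratedDeriv 3 U y + 6 * U y * deriv U y)) :=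
    continuous_const.mul (hC3.add ((continuous_const.mul hC0).mul hC1))
  have hpn : ∀ n : ℕ, Function.Periodic (iteratedDeriv n U) 1 := by
    intro n
    induction n with
    | zero => simpa [iteratedDeriv_zero] using hper
    | succ n ih => rw [iteratedDeriv_succ]; exact periodic_deriv ih
  have hp1 : Function.Periodic (deriv U) 1 := by
    rw [← iteratedDeriv_one]
    exact hpn 1
  -- derivative of the zero-average primitive
  have hP : ∀ y : ℝ, HasDerivAt (prim (fun z => U z - avg U)) (U y - avg U) y := fun y =>
    prim_hasDerivAt (hC0.sub continuous_const) y
  -- derivative chains for W = F3op C₃ U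
  have hWd1 : ∀ y : ℝ, HasDerivAt (fun z => C₃ * (iteratedDeriv 3 U z + 6 * U z * deriv U z)) (C₃ * (iteratedDeriv 4 U y + (6 * deriv U y * deriv U y + 6 * U y * iteratedDeriv 2 U y))) y := fun y =>
    HDcongr (((D3 y).add (((D0 y).const_mul 6).mul (D1 y))).const_mul C₃) (by ring)
  have hw1d : ∀ y : ℝ, HasDerivAt (fun z => C₃ * (iteratedDeriv 4 U z + (6 * deriv U z * deriv U z + 6 * U z * iteratedDeriv 2 U z))) (C₃ * (iteratedDeriv 5 U y + (18 * deriv U y * iteratedDeriv 2 U y + 6 * U y * iteratedDeriv 3 U y))) y := fun y =>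
    HDcongr (((D4 y).add ((((D1 y).const_mul 6).mul (D1 y)).add (((D0 y).const_mul 6).mul (D2 y)))).const_mul C₃) (by ring)
  -- derivative chains for G = G2op U
  have hGd1 : ∀ y : ℝ, HasDerivAt (fun z => C₅ / C₃ * (a₁ * iteratedDeriv 2 U z + a₂ * (U z ^ 2 - avg (fun z => U z ^ 2)) + a₃ * (deriv U z * prim (fun z => U z - avg U) z + avg (fun z => U z ^ 2) - avg U ^ 2) + a₄ * avg U * (U z - avg U))) (C₅ / C₃ * (a₁ * iteratedDeriv 3 U y + 2 * a₂ * U y * deriv U y + a₃ * (iteratedDeriv 2 U y * prim (fun z => U z - avg U) y + deriv U y * (U y - avg U)) + a₄ * avg U * deriv U y)) y := fun y =>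
    HDcongr ((((((D2 y).const_mul a₁).add ((((D0 y).pow 2).sub_const (avg (fun z => U z ^ 2))).const_mul a₂)).add (((((D1 y).mul (hP y)).add_const (avg (fun z => U z ^ 2))).sub_const (avg U ^ 2)).const_mul a₃)).add (((D0 y).sub_const (avg U)).const_mul (a₄ * avg U))).const_mul (C₅ / C₃)) (by push_cast; ring)
  have hg1d : ∀ y : ℝ, HasDerivAt (fun z => C₅ / C₃ * (a₁ * iteratedDeriv 3 U z + 2 * a₂ * U z * deriv U z + a₃ * (iteratedDeriv 2 U z * prim (fun z => U z - avg U) z + deriv U z * (U z - avg U)) + a₄ * avg U * deriv U z)) (C₅ / C₃ * (a₁ * iteratedDeriv 4 U y + 2 * a₂ * (deriv U y * deriv U y + U y * iteratedDeriv 2 U y) + a₃ * (iteratedDeriv 3 U y * prim (fun z => U z - avg U) y + 2 * iteratedDeriv 2 U y * (U y - avg U) + deriv U y * deriv U y) + a₄ * avg U * iteratedDeriv 2 U y)) y := fun y =>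
    HDcongr ((((((D3 y).const_mul a₁).add (((D0 y).const_mul (2 * a₂)).mul (D1 y))).add ((((D2 y).mul (hP y)).add ((D1 y).mul ((D0 y).sub_const (avg U)))).const_mul a₃)).add ((D1 y).const_mul (a₄ * avg U))).const_mul (C₅ / C₃)) (by ring)
  have hg2d : ∀ y : ℝ, HasDerivAt (fun z => C₅ / C₃ * (a₁ * iteratedDeriv 4 U z + 2 * a₂ * (deriv U z * deriv U z + U z * iteratedDeriv 2 U z) + a₃ * (iteratedDeriv 3 U z * prim (fun z => U z - avg U) z + 2 * iteratedDeriv 2 U z * (U z - avg U) + deriv U z * deriv U z) + a₄ * avg U * iteratedDeriv 2 U z)) (C₅ / C₃ * (a₁ * iteratedDeriv 5 U y + 2 * a₂ * (3 * iteratedDeriv 2 U y * deriv U y + U y * iteratedDeriv 3 U y) + a₃ * (iteratedDeriv 4 U y * prim (fun z => U z - avg U) y + 3 * iteratedDeriv 3 U y * (U y - avg U) + 4 * deriv U y * iteratedDeriv 2 U y) + a₄ * avg U * iteratedDeriv 3 U y)) y := fun y =>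
    HDcongr ((((((D4 y).const_mul a₁).add ((((D1 y).mul (D1 y)).add ((D0 y).mul (D2 y))).const_mul (2 * a₂))).add (((((D3 y).mul (hP y)).add (((D2 y).const_mul 2).mul ((D0 y).sub_const (avg U)))).add ((D1 y).mul (D1 y))).const_mul a₃)).add ((D2 y).const_mul (a₄ * avg U))).const_mul (C₅ / C₃)) (by ring)
  -- integral facts
  have hH2d : ∀ y : ℝ, HasDerivAt (fun z => C₃ * (iteratedDeriv 2 U z + 3 * U z ^ 2)) (C₃ * (iteratedDeriv 3 U y + 6 * U y * deriv U y)) y :=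
    fun y => HDcongr (((D2 y).add (((D0 y).pow 2).const_mul 3)).const_mul C₃) (by push_cast; ring)
  have hH2per : Function.Periodic (fun z => C₃ * (iteratedDeriv 2 U z + 3 * U z ^ 2)) 1 := by
    intro y
    show C₃ * (iteratedDeriv 2 U (y + 1) + 3 * U (y + 1) ^ 2) = _
    rw [hpn 2 y, hper y]
  have havgW : avg (fun y => C₃ * (iteratedDeriv 3 U y + 6 * U y * deriv U y)) = 0 := avg_of_hasDerivAt hH2d hCW hH2per
  have hUWd : ∀ y : ℝ, HasDerivAt
      (fun z => C₃ * (U z * iteratedDeriv 2 U z - 1/2 * deriv U z ^ 2 + 2 * U z ^ 3))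
      (U y * (C₃ * (iteratedDeriv 3 U y + 6 * U y * deriv U y))) y := fun y =>
    HDcongr (((((D0 y).mul (D2 y)).sub (((D1 y).pow 2).const_mul (1/2))).add (((D0 y).pow 3).const_mul 2)).const_mul C₃) (by push_cast; ring)
  have hUWper : Function.Periodic
      (fun z => C₃ * (U z * iteratedDeriv 2 U z - 1/2 * deriv U z ^ 2 + 2 * U z ^ 3)) 1 := by
    intro y
    show C₃ * (U (y + 1) * iteratedDeriv 2 U (y + 1) - 1/2 * deriv U (y + 1) ^ 2 + 2 * U (y + 1) ^ 3) = _
    rw [hpn 2 y, hper y, hp1 y]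
  have havgUW : avg (fun y => U y * (C₃ * (iteratedDeriv 3 U y + 6 * U y * deriv U y))) = 0 :=
    avg_of_hasDerivAt hUWd (hC0.mul hCW) hUWper
  have havgU2 : avg (iteratedDeriv 2 U) = 0 := avg_of_hasDerivAt D1 hC2 hp1
  have hQX : prim (fun y => C₃ * (iteratedDeriv 3 U y + 6 * U y * deriv U y)) x
      = C₃ * (iteratedDeriv 2 U x + 3 * U x ^ 2) - C₃ * (3 * avg (fun z => U z ^ 2)) := by
    rw [prim_eq_of_hasDerivAt (H := fun z => C₃ * (iteratedDeriv 2 U z + 3 * U z ^ 2)) hH2d hCW x]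
    have hAH : avg (fun z => C₃ * (iteratedDeriv 2 U z + 3 * U z ^ 2))
        = C₃ * (3 * avg (fun z => U z ^ 2)) := by
      rw [avg_const_mul, avg_add_mul (g := fun z => U z ^ 2) hC2 (hC0.pow 2) 3, havgU2]
      ring
    rw [hAH]
  -- the main pointwise expansion in ε
  have key : ∀ ε : ℝ,
      G2op C₃ C₅ a₁ a₂ a₃ a₄ (fun y => U y + ε * F3op C₃ U y) x
        - F3op C₃ (fun y => U y + ε * G2op C₃ C₅ a₁ a₂ a₃ a₄ U y) x
      = (C₅ / C₃ * (a₁ * iteratedDeriv 2 U x + a₂ * (U x ^ 2 - avg (fun z => U z ^ 2)) + a₃ * (deriv U x * prim (fun z => U z - avg U) x + avg (fun z => U z ^ 2) - avg U ^ 2) + a₄ * avg U * (U x - avg U)) - C₃ * (iteratedDeriv 3 U x + 6 * U x * deriv U x)) + ε * ((C₅ / C₃ * (a₁ * (C₃ * (iteratedDeriv 5 U x + (18 * deriv U x * iteratedDeriv 2 U x + 6 * U x * iteratedDeriv 3 U x))) + 2 * a₂ * U x * (C₃ * (iteratedDeriv 3 U x + 6 * U x * deriv U x)) + a₃ * ((C₃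 * (iteratedDeriv 4 U x + (6 * deriv U x * deriv U x + 6 * U x * iteratedDeriv 2 U x))) * prim (fun z => U z - avg U) x + deriv U x * (C₃ * (iteratedDeriv 2 U x + 3 * U x ^ 2) - C₃ * (3 * avg (fun z => U z ^ 2)))) + a₄ * avg U * (C₃ * (iteratedDeriv 3 U x + 6 * U x * deriv U x))) - C₃ * ((C₅ / C₃ * (a₁ * iteratedDeriv 5 U x + 2 * a₂ * (3 * iteratedDeriv 2 U x * deriv U x + U x * iteratedDeriv 3 U x) + a₃ * (iteratedDeriv 4 U x * prim (fun z => U z - avg U) x + 3 * iteratedDeriv 3 U x * (U x - avg U) + 4 * deriv U x * iteratedDeriv 2 U x) + a₄ * avg U * iteratedDeriv 3 U x)) + 6 * (U x * (C₅ / C₃ * (a₁ * iteratedDeriv 3 U x + 2 * a₂ * U x * deriv U x + a₃ * (iteratedDeriv 2 U x * prim (fun z => U z - avg U) x + deriv U x * (U x - avg U)) + a₄ * avg U * deriv U x)) + (C₅ / C₃ * (a₁ * iteratedDeriv 2 U x + a₂ * (U x ^ 2 - avg (fun z => U z ^ 2)) + a₃ * (deriv U x * prim (fun z => U z - avg U)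 x + avg (fun z => U z ^ 2) - avg U ^ 2) + a₄ * avg U * (U x - avg U))) * deriv U x))) + ε * (C₅ / C₃ * (a₂ * ((C₃ * (iteratedDeriv 3 U x + 6 * U x * deriv U x)) ^ 2 - avg (fun y => (C₃ * (iteratedDeriv 3 U y + 6 * U y * deriv U y)) ^ 2)) + a₃ * ((C₃ * (iteratedDeriv 4 U x + (6 * deriv U x * deriv U x + 6 * U x * iteratedDeriv 2 U x))) * (C₃ * (iteratedDeriv 2 U x + 3 * U x ^ 2) - C₃ * (3 * avg (fun z => U z ^ 2))) + avg (fun y => (C₃ * (iteratedDeriv 3 U y + 6 * U y * deriv U y)) ^ 2))) - C₃ * (6 * (C₅ / C₃ * (a₁ * iteratedDeriv 2 U x + a₂ * (U x ^ 2 - avg (fun z => U z ^ 2)) + a₃ * (deriv U x * prim (fun z => U z - avg U) x + avg (fun z => U z ^ 2) - avg U ^ 2) + a₄ * avg U * (U x - avg U))) * (C₅ / C₃ * (a₁ * iteratedDeriv 3 U x + 2 * a₂ * U x * deriv U x + a₃ * (iteratedDeriv 2 U x * prim (fun z => U z - avg U) x + deriv U x * (U x - avg U)) + a₄ * avg U *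 deriv U x))))) := by
    intro ε
    have E1 : iteratedDeriv 2 (fun y => U y + ε * (C₃ * (iteratedDeriv 3 U y + 6 * U y * deriv U y))) x
        = iteratedDeriv 2 U x + ε * (C₃ * (iteratedDeriv 5 U x + (18 * deriv U x * iteratedDeriv 2 U x + 6 * U x * iteratedDeriv 3 U x))) := by
      rw [iteratedDeriv_two]
      rw [show deriv (fun y => U y + ε * (C₃ * (iteratedDeriv 3 U y + 6 * U y * deriv U y))) = (fun y => deriv U y + ε * (C₃ * (iteratedDeriv 4 U y + (6 * deriv U y * deriv U y + 6 * U y * iteratedDeriv 2 U y))))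
        from funext fun y => ((D0 y).add ((hWd1 y).const_mul ε)).deriv]
      exact ((D1 x).add ((hw1d x).const_mul ε)).deriv
    have E4 : deriv (fun y => U y + ε * (C₃ * (iteratedDeriv 3 U y + 6 * U y * deriv U y))) x = deriv U x + ε * (C₃ * (iteratedDeriv 4 U x + (6 * deriv U x * deriv U x + 6 * U x * iteratedDeriv 2 U x))) :=
      ((D0 x).add ((hWd1 x).const_mul ε)).deriv
    have E3 : avg (fun y => (U y + ε * (C₃ * (iteratedDeriv 3 U y + 6 * U y * deriv U y))) ^ 2)
        = avg (fun z => U z ^ 2) + ε ^ 2 * avg (fun y => (C₃ * (iteratedDeriv 3 U y + 6 * U y * deriv U y)) ^ 2) := by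
      rw [show (fun y => (U y + ε * (C₃ * (iteratedDeriv 3 U y + 6 * U y * deriv U y))) ^ 2)
          = (fun y => U y ^ 2 + ε * (2 * (U y * (C₃ * (iteratedDeriv 3 U y + 6 * U y * deriv U y))) + ε * (C₃ * (iteratedDeriv 3 U y + 6 * U y * deriv U y)) ^ 2))
        from funext fun y => by ring]
      rw [avg_add_mul (f := fun y => U y ^ 2) (g := fun y => 2 * (U y * (C₃ * (iteratedDeriv 3 U y + 6 * U y * deriv U y))) + ε * (C₃ * (iteratedDeriv 3 U y + 6 * U y * deriv U y)) ^ 2) (hC0.pow 2) ((continuous_const.mul (hC0.mul hCW)).add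
        (continuous_const.mul (hCW.pow 2))) ε]
      rw [avg_add_mul (f := fun y => 2 * (U y * (C₃ * (iteratedDeriv 3 U y + 6 * U y * deriv U y)))) (g := fun y => (C₃ * (iteratedDeriv 3 U y + 6 * U y * deriv U y)) ^ 2) (continuous_const.mul (hC0.mul hCW)) (hCW.pow 2) ε]
      rw [avg_const_mul 2 (fun y => U y * (C₃ * (iteratedDeriv 3 U y + 6 * U y * deriv U y))), havgUW]
      ring
    have E5 : avg (fun y => U y + ε * (C₃ * (iteratedDeriv 3 U y + 6 * U y * deriv U y))) = avg U := by
      rw [avg_add_mul hC0 hCW ε, havgW]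
      ring
    have E6 : prim (fun y => U y + ε * (C₃ * (iteratedDeriv 3 U y + 6 * U y * deriv U y)) - avg U) x
        = prim (fun z => U z - avg U) x
          + ε * (C₃ * (iteratedDeriv 2 U x + 3 * U x ^ 2) - C₃ * (3 * avg (fun z => U z ^ 2))) := by
      rw [show (fun y => U y + ε * (C₃ * (iteratedDeriv 3 U y + 6 * U y * deriv U y)) - avg U) = (fun y => U y - avg U + ε * (C₃ * (iteratedDeriv 3 U y + 6 * U y * deriv U y)))
        from funext fun y => by ring]
      rw [prim_add_mul (f := fun y => U y - avg U) (hC0.sub continuous_const) hCW ε x, hQX]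
    have E7 : iteratedDeriv 3 (fun y => U y + ε * (C₅ / C₃ * (a₁ * iteratedDeriv 2 U y + a₂ * (U y ^ 2 - avg (fun z => U z ^ 2)) + a₃ * (deriv U y * prim (fun z => U z - avg U) y + avg (fun z => U z ^ 2) - avg U ^ 2) + a₄ * avg U * (U y - avg U)))) x
        = iteratedDeriv 3 U x + ε * (C₅ / C₃ * (a₁ * iteratedDeriv 5 U x + 2 * a₂ * (3 * iteratedDeriv 2 U x * deriv U x + U x * iteratedDeriv 3 U x) + a₃ * (iteratedDeriv 4 U x * prim (fun z => U z - avg U) x + 3 * iteratedDeriv 3 U x * (U x - avg U) + 4 * deriv U x * iteratedDeriv 2 U x) + a₄ * avg U * iteratedDeriv 3 U x)) := by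
      rw [iteratedDeriv_three]
      rw [show deriv (fun y => U y + ε * (C₅ / C₃ * (a₁ * iteratedDeriv 2 U y + a₂ * (U y ^ 2 - avg (fun z => U z ^ 2)) + a₃ * (deriv U y * prim (fun z => U z - avg U) y + avg (fun z => U z ^ 2) - avg U ^ 2) + a₄ * avg U * (U y - avg U)))) = (fun y => deriv U y + ε * (C₅ / C₃ * (a₁ * iteratedDeriv 3 U y + 2 * a₂ * U y * deriv U y + a₃ * (iteratedDeriv 2 U y * prim (fun z => U z - avg U) y + deriv U y * (U y - avg U)) + a₄ * avg U * deriv U y)))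
        from funext fun y => ((D0 y).add ((hGd1 y).const_mul ε)).deriv]
      rw [show deriv (fun y => deriv U y + ε * (C₅ / C₃ * (a₁ * iteratedDeriv 3 U y + 2 * a₂ * U y * deriv U y + a₃ * (iteratedDeriv 2 U y * prim (fun z => U z - avg U) y + deriv U y * (U y - avg U)) + a₄ * avg U * deriv U y))) = (fun y => iteratedDeriv 2 U y + ε * (C₅ / C₃ * (a₁ * iteratedDeriv 4 U y + 2 * a₂ * (deriv U y * deriv U y + U y * iteratedDeriv 2 U y) + a₃ * (iteratedDeriv 3 U y * prim (fun z => U z - avg U) y + 2 * iteratedDeriv 2 U y * (U y - avg U) + deriv U y * deriv U y) + a₄ * avg U * iteratedDeriv 2 U y)))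
        from funext fun y => ((D1 y).add ((hg1d y).const_mul ε)).deriv]
      exact ((D2 x).add ((hg2d x).const_mul ε)).deriv
    have E8 : deriv (fun y => U y + ε * (C₅ / C₃ * (a₁ * iteratedDeriv 2 U y + a₂ * (U y ^ 2 - avg (fun z => U z ^ 2)) + a₃ * (deriv U y * prim (fun z => U z - avg U) y + avg (fun z => U z ^ 2) - avg U ^ 2) + a₄ * avg U * (U y - avg U)))) x = deriv U x + ε * (C₅ / C₃ * (a₁ * iteratedDeriv 3 U x + 2 * a₂ * U x * deriv U x + a₃ * (iteratedDeriv 2 U x * prim (fun z => U z - avg U) x + deriv U x * (U x - avg U)) + a₄ * avg U * deriv U x)) :=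
      ((D0 x).add ((hGd1 x).const_mul ε)).deriv
    simp only [G2op, F3op]
    rw [E1, E4, E3, E5, E6, E7, E8]
    ring
  simp only [key]
  exact HDcongr ((hasDerivAt_id' (0:ℝ)).mul
      (((hasDerivAt_id' (0:ℝ)).mul_const ((C₅ / C₃ * (a₂ * ((C₃ * (iteratedDeriv 3 U x + 6 * U x * deriv U x)) ^ 2 - avg (fun y => (C₃ * (iteratedDeriv 3 U y + 6 * U y * deriv U y)) ^ 2)) + a₃ * ((C₃ * (iteratedDeriv 4 U x + (6 * deriv U x * deriv U x + 6 * U x * iteratedDeriv 2 U x))) * (C₃ * (iteratedDeriv 2 U x + 3 * U x ^ 2) - C₃ * (3 * avg (fun z => U z ^ 2))) + avg (fun y => (C₃ * (iteratedDeriv 3 U y + 6 * U y * deriv U y)) ^ 2))) - C₃ * (6 * (C₅ / C₃ * (a₁ * iteratedDeriv 2 U x + a₂ * (U x ^ 2 - avg (fun z => U z ^ 2)) + a₃ * (deriv U x * prim (fun z => U z - avg U) x + avg (fun z => U z ^ 2) - avg U ^ 2) + a₄ * avg U * (U x - avg U))) * (C₅ / C₃ * (a₁ * iteratedDeriv 3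 U x + 2 * a₂ * U x * deriv U x + a₃ * (iteratedDeriv 2 U x * prim (fun z => U z - avg U) x + deriv U x * (U x - avg U)) + a₄ * avg U * deriv U x)))))).const_add ((C₅ / C₃ * (a₁ * (C₃ * (iteratedDeriv 5 U x + (18 * deriv U x * iteratedDeriv 2 U x + 6 * U x * iteratedDeriv 3 U x))) + 2 * a₂ * U x * (C₃ * (iteratedDeriv 3 U x + 6 * U x * deriv U x)) + a₃ * ((C₃ * (iteratedDeriv 4 U x + (6 * deriv U x * deriv U x + 6 * U x * iteratedDeriv 2 U x))) * prim (fun z => U z - avg U) x + deriv U x * (C₃ * (iteratedDeriv 2 U x + 3 * U x ^ 2) - C₃ * (3 * avg (fun z => U z ^ 2)))) + a₄ * avg U * (C₃ * (iteratedDeriv 3 U x + 6 * U x * deriv U x))) - C₃ * ((C₅ / C₃ * (a₁ * iteratedDeriv 5 U x + 2 * a₂ * (3 * iteratedDeriv 2 U x * deriv U x + U x * iteratedDeriv 3 U x) + a₃ * (iteratedDeriv 4 U x * prim (fun z => U z - avg U) x + 3 * iteratedDeriv 3 U x * (U x - avg U) + 4 * deriv U x * iteratedDeriv 2 U x) + a₄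 * avg U * iteratedDeriv 3 U x)) + 6 * (U x * (C₅ / C₃ * (a₁ * iteratedDeriv 3 U x + 2 * a₂ * U x * deriv U x + a₃ * (iteratedDeriv 2 U x * prim (fun z => U z - avg U) x + deriv U x * (U x - avg U)) + a₄ * avg U * deriv U x)) + (C₅ / C₃ * (a₁ * iteratedDeriv 2 U x + a₂ * (U x ^ 2 - avg (fun z => U z ^ 2)) + a₃ * (deriv U x * prim (fun z => U z - avg U) x + avg (fun z => U z ^ 2) - avg U ^ 2) + a₄ * avg U * (U x - avg U))) * deriv U x))))) |>.const_add ((C₅ / C₃ * (a₁ * iteratedDeriv 2 U x + a₂ * (U x ^ 2 - avg (fun z => U z ^ 2)) + a₃ * (deriv U x * prim (fun z => U z - avg U) x + avg (fun z => U z ^ 2) - avg U ^ 2) + a₄ * avg U * (U x - avg U)) - C₃ * (iteratedDeriv 3 U x + 6 * U x * deriv U x))))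
    (by field_simp; ring)
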